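/- arXiv:math/0209399 — 5 statements merged into one kernel-verified Lean document; each statement's English description precedes it below -/
import Mathlib

section
/- For positive definite matrices B and P, the equation A*B*A = P has a unique positive definite solution A, namely A = B^{-1/2} (B^{1/2} P B^{1/2})^{1/2} B^{-1/2}. -/
/-!
With `S = B^{1/2}`, congruence by the invertible Hermitian matrix `S` preserves positive
definiteness in both directions, and `A * B * A = P` is equivalent to `(S A S)^2 = S P S`.
So `A` solves the problem iff `S A S` is a positive definite square root of `S P S`, i.e. iff
`S A S = (S P S)^{1/2}` by uniqueness of positive square roots.
-/

open scoped ComplexOrder Matrix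

noncomputable def Matrix.PosSemidef.sqrt {n : Type*} [Fintype n] [DecidableEq n]
    {𝕜 : Type*} [RCLike 𝕜] {A : Matrix n n 𝕜} (hA : A.PosSemidef) : Matrix n n 𝕜 :=
  hA.isHermitian.eigenvectorUnitary.1 * Matrix.diagonal ((↑) ∘ (√·) ∘ hA.isHermitian.eigenvalues) *
  (star hA.isHermitian.eigenvectorUnitary : Matrix n n 𝕜)

lemma Matrix.PosSemidef.posSemidef_sqrt {n : Type*} [Fintype n] [DecidableEq n]
    {𝕜 : Type*} [RCLike 𝕜] {A : Matrix n n 𝕜} (hA : A.PosSemidef) : hA.sqrt.PosSemidef := by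
  have hd : (Matrix.diagonal ((↑) ∘ (√·) ∘ hA.isHermitian.eigenvalues : n → 𝕜)).PosSemidef := by
    rw [Matrix.posSemidef_diagonal_iff]
    intro i
    simp only [Function.comp_apply, RCLike.ofReal_nonneg]
    exact Real.sqrt_nonneg _
  have := hd.mul_mul_conjTranspose_same (hA.isHermitian.eigenvectorUnitary : Matrix n n 𝕜)
  unfold Matrix.PosSemidef.sqrt
  convert this using 1
  rfl

lemma middle_posSemidef {n : ℕ} {B P : Matrix (Fin n) (Fin n) ℂ}
    (hB : B.PosDef) (hP : P.PosDef) :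
    (hB.posSemidef.sqrt * P * hB.posSemidef.sqrt).PosSemidef := by
  have h := hP.posSemidef.mul_mul_conjTranspose_same hB.posSemidef.sqrt
  rwa [hB.posSemidef.posSemidef_sqrt.1] at h

lemma IsUnit.mul_mul_self_mul_eq_iff {R : Type*} [Monoid R] {s a p : R} (hs : IsUnit s) :
    a * (s * s) * a = p ↔ (s * a * s) ^ 2 = s * p * s := by
  rw [show (s * a * s) ^ 2 = s * (a * (s * s) * a) * s by simp only [sq, mul_assoc],
    hs.mul_left_inj, hs.mul_right_inj]

namespace Matrix

variable {n : Type*} [Fintype n] [DecidableEq n]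

lemma eq_nonsing_inv_mul_mul_nonsing_inv_iff {α : Type*} [CommRing α] {S A R : Matrix n n α}
    (hS : IsUnit S) : A = S⁻¹ * R * S⁻¹ ↔ S * A * S = R := by
  have hdet := (isUnit_iff_isUnit_det S).mp hS
  constructor <;> rintro rfl <;> simp [Matrix.mul_assoc, hdet]

open scoped MatrixOrder

variable {𝕜 : Type*} [RCLike 𝕜]

lemma PosSemidef.sqrt_eq_cfcSqrt {A : Matrix n n 𝕜} (hA : A.PosSemidef) : hA.sqrt = CFC.sqrt A := by
  rw [CFC.sqrt_eq_real_sqrt A hA.nonneg, cfcₙ_eq_cfc, hA.isHermitian.cfc_eq]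
  rfl

lemma PosDef.posDef_sqrt {A : Matrix n n 𝕜} (hA : A.PosDef) : hA.posSemidef.sqrt.PosDef := by
  rw [PosSemidef.sqrt_eq_cfcSqrt]
  exact isStrictlyPositive_iff_posDef.mp (IsStrictlyPositive.sqrt A hA.isStrictlyPositive)

lemma PosDef.sqrt_sq {A : Matrix n n 𝕜} (hA : A.PosDef) : hA.posSemidef.sqrt ^ 2 = A := by
  rw [PosSemidef.sqrt_eq_cfcSqrt]
  exact CFC.sq_sqrt A hA.posSemidef.nonneg

lemma PosDef.posDef_and_sq_eq_iff {A X : Matrix n n 𝕜} (hA : A.PosDef) :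
    X.PosDef ∧ X ^ 2 = A ↔ X = hA.posSemidef.sqrt := by
  constructor
  · rintro ⟨hX, rfl⟩
    rw [PosSemidef.sqrt_eq_cfcSqrt]
    exact (CFC.sqrt_sq X hX.posSemidef.nonneg).symm
  · rintro rfl
    exact ⟨hA.posDef_sqrt, hA.sqrt_sq⟩

lemma IsHermitian.posDef_mul_mul_self_iff {S A : Matrix n n 𝕜} (hS : S.IsHermitian)
    (hSu : IsUnit S) : (S * A * S).PosDef ↔ A.PosDef := by
  simpa only [star_eq_conjTranspose, hS.eq] using IsUnit.posDef_star_left_conjugate_iff hSu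

end Matrix

/-- The equation `A*B*A = P` has the unique positive definite solution
`A = B^{-1/2} (B^{1/2} P B^{1/2})^{1/2} B^{-1/2}`. -/
theorem stmt_4 {n : ℕ} (B P : Matrix (Fin n) (Fin n) ℂ)
    (hB : B.PosDef) (hP : P.PosDef) :
    ∀ A : Matrix (Fin n) (Fin n) ℂ,
      (A.PosDef ∧ A * B * A = P) ↔
        A = (hB.posSemidef.sqrt)⁻¹ * (middle_posSemidef hB hP).sqrt *
              (hB.posSemidef.sqrt)⁻¹ := by
  intro A
  set S := hB.posSemidef.sqrt
  have hS : S.PosDef := hB.posDef_sqrt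
  have hSu : IsUnit S := hS.isUnit
  have hSS : S * S = B := by rw [← sq]; exact hB.sqrt_sq
  have hM : (S * P * S).PosDef := (hS.isHermitian.posDef_mul_mul_self_iff hSu).mpr hP
  calc (A.PosDef ∧ A * B * A = P)
      ↔ (S * A * S).PosDef ∧ (S * A * S) ^ 2 = S * P * S := by
        rw [hS.isHermitian.posDef_mul_mul_self_iff hSu, ← hSS, hSu.mul_mul_self_mul_eq_iff]
    _ ↔ S * A * S = hM.posSemidef.sqrt := hM.posDef_and_sq_eq_iff
    _ ↔ _ := (Matrix.eq_nonsing_inv_mul_mul_nonsing_inv_iff hSu).symm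
end

section
/- If B is positive definite, A is positive definite, and A^{-1} B A^2 B A^{-1} = I, then B = I. Consequently, for any positive definite B ≠ I, the equation A^{-1} B A^2 B A^{-1} = I has no positive definite solution A. -/
/-!
Multiplying the equation by `A` on both sides gives `B A² B = A²`, hence `(A B A)² = (A²)²`.
Both `A B A` and `A²` are positive semidefinite, and positive semidefinite square roots are
unique, so `A B A = A²`; cancelling the invertible `A` leaves `B = 1`.
-/

open scoped ComplexOrder Matrix

namespace Matrix

variable {m 𝕜 : Type*} [Fintype m] [DecidableEq m] [RCLike 𝕜]

theorem PosSemidef.eq_of_sq_eq_sq {P Q : Matrix m m 𝕜} (hP : P.PosSemidef) (hQ : Q.PosSemidef)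
    (h : P ^ 2 = Q ^ 2) : P = Q := by
  open scoped MatrixOrder Matrix.Norms.L2Operator in
  exact (CFC.sq_eq_sq_iff P Q hP.nonneg hQ.nonneg).mp h

theorem eq_mul_self_of_inv_mul_mul_inv_eq_one {A X : Matrix m m 𝕜} (hA : IsUnit A)
    (h : A⁻¹ * X * A⁻¹ = 1) : X = A * A := by
  have hdet : IsUnit A.det := (isUnit_iff_isUnit_det A).mp hA
  calc X = A * (A⁻¹ * X * A⁻¹) * A := by
        rw [Matrix.mul_assoc, Matrix.mul_assoc, nonsing_inv_mul _ hdet, Matrix.mul_one,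
          mul_nonsing_inv_cancel_left _ _ hdet]
    _ = A * A := by rw [h, Matrix.mul_one]

theorem eq_one_of_inv_mul_mul_sq_mul_mul_inv_eq_one {A B : Matrix m m 𝕜} (hA : A.IsHermitian)
    (hAu : IsUnit A) (hB : B.PosSemidef) (h : A⁻¹ * B * A ^ 2 * B * A⁻¹ = 1) : B = 1 := by
  have hBAB : B * A ^ 2 * B = A * A :=
    eq_mul_self_of_inv_mul_mul_inv_eq_one hAu (by simpa only [Matrix.mul_assoc] using h)
  have hsq : (A * B * A) ^ 2 = (A * A) ^ 2 :=
    calc (A * B * A) ^ 2 = A * (B * A ^ 2 * B) * A := by simp only [sq, Matrix.mul_assoc]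
      _ = (A * A) ^ 2 := by rw [hBAB, sq]; simp only [Matrix.mul_assoc]
  have hABA : (A * B * A).PosSemidef := by
    simpa only [hA.eq] using hB.mul_mul_conjTranspose_same A
  have hAA : (A * A).PosSemidef := by
    simpa only [hA.eq] using posSemidef_self_mul_conjTranspose A
  have hcancel : A * (B * A) = A * (1 * A) := by
    rw [← Matrix.mul_assoc, hABA.eq_of_sq_eq_sq hAA hsq, Matrix.one_mul]
  exact hAu.mul_right_cancel (hAu.mul_left_cancel hcancel)

end Matrix

theorem stmt_7 {n : ℕ} (B : Matrix (Fin n) (Fin n) ℂ) (hB : B.PosDef) :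
    (∀ A : Matrix (Fin n) (Fin n) ℂ, A.PosDef →
        A⁻¹ * B * A ^ 2 * B * A⁻¹ = 1 → B = 1) ∧
      (B ≠ 1 → ¬ ∃ A : Matrix (Fin n) (Fin n) ℂ, A.PosDef ∧
        A⁻¹ * B * A ^ 2 * B * A⁻¹ = 1) := by
  have key : ∀ A : Matrix (Fin n) (Fin n) ℂ, A.PosDef →
      A⁻¹ * B * A ^ 2 * B * A⁻¹ = 1 → B = 1 := fun A hA h =>
    Matrix.eq_one_of_inv_mul_mul_sq_mul_mul_inv_eq_one hA.isHermitian hA.isUnit hB.posSemidef h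
  exact ⟨key, fun hne ⟨A, hA, h⟩ => hne (key A hA h)⟩
end

section
/- For every pair of positive definite n-by-n matrices B and P, there exists a positive definite A with A*B*A*B*A = P. -/
/-!
Writing `s = √b`, the substitution `a = s⁻¹ c s⁻¹` collapses every factor `s⁻¹ b s⁻¹` of
`(a b)ᵏ a` to `1`, so `(a b)ᵏ a = p` becomes `cᵏ⁺¹ = s p s`: take for `c` the strictly positive
`(k+1)`-th root of `s p s`.
-/

namespace CFC

open Ring

variable {A : Type*} [PartialOrder A] [Ring A] [StarRing A] [TopologicalSpace A]
  [StarOrderedRing A] [Algebra ℝ A] [ContinuousFunctionalCalculus ℝ A IsSelfAdjoint]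
  [NonnegSpectrumClass ℝ A] [IsSemitopologicalRing A] [T2Space A]

theorem exists_isStrictlyPositive_pow_eq {c : A} (hc : IsStrictlyPositive c) {m : ℕ}
    (hm : m ≠ 0) : ∃ r : A, IsStrictlyPositive r ∧ r ^ m = c := by
  refine ⟨c ^ (m : ℝ)⁻¹, IsStrictlyPositive.rpow c _, ?_⟩
  rw [← rpow_natCast _ m, rpow_inv_rpow c m (Nat.cast_ne_zero.mpr hm)]

theorem conjSqrt_ringInverse_mul_mul {b : A} (hb : IsStrictlyPositive b) (x y : A) :
    conjSqrt b⁻¹ʳ x * b * conjSqrt b⁻¹ʳ y = conjSqrt b⁻¹ʳ (x * y) := by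
  have h := conjSqrt_ringInverse_self b hb
  simp only [conjSqrt_apply] at h ⊢
  calc _ = sqrt b⁻¹ʳ * x * (sqrt b⁻¹ʳ * b * sqrt b⁻¹ʳ) * y * sqrt b⁻¹ʳ := by noncomm_ring
    _ = _ := by rw [h, mul_one, mul_assoc (sqrt b⁻¹ʳ) x y]

theorem mul_pow_mul_conjSqrt_ringInverse {b : A} (hb : IsStrictlyPositive b) (x : A) (k : ℕ) :
    (conjSqrt b⁻¹ʳ x * b) ^ k * conjSqrt b⁻¹ʳ x = conjSqrt b⁻¹ʳ (x ^ (k + 1)) := by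
  induction k with
  | zero => simp
  | succ k ih =>
    rw [pow_succ', mul_assoc, ih, conjSqrt_ringInverse_mul_mul hb, ← pow_succ']

theorem exists_isStrictlyPositive_mul_pow_mul_eq {b p : A} (hb : IsStrictlyPositive b)
    (hp : IsStrictlyPositive p) (k : ℕ) :
    ∃ a : A, IsStrictlyPositive a ∧ (a * b) ^ k * a = p := by
  obtain ⟨r, hr, hrp⟩ := exists_isStrictlyPositive_pow_eq
    ((isStrictlyPositive_conjSqrt_iff b p hb).mpr hp) k.succ_ne_zero
  refine ⟨conjSqrt b⁻¹ʳ r, (isStrictlyPositive_conjSqrt_iff _ r hb.ringInverse).mpr hr, ?_⟩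
  rw [mul_pow_mul_conjSqrt_ringInverse hb, hrp, conjSqrt_ringInverse_conjSqrt b p hb]

end CFC

open scoped ComplexOrder

/-- The symmetric word equation `A*B*A*B*A = P` is solvable in positive definite `A`. -/
theorem stmt_16 {n : ℕ} (B P : Matrix (Fin n) (Fin n) ℂ)
    (hB : B.PosDef) (hP : P.PosDef) :
    ∃ A : Matrix (Fin n) (Fin n) ℂ, A.PosDef ∧ A * B * A * B * A = P := by
  open scoped MatrixOrder in
  obtain ⟨A, hA, hABP⟩ :=
    CFC.exists_isStrictlyPositive_mul_pow_mul_eq hB.isStrictlyPositive hP.isStrictlyPositive 2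
  exact ⟨A, Matrix.IsStrictlyPositive.posDef hA, by simpa [pow_two, mul_assoc] using hABP⟩
end

section
/- If C is an invertible n-by-n matrix, A is positive definite, and W = A C A C* A, then W is Hermitian positive definite. -/
open scoped ComplexOrder Matrix

/-- The generalized symmetric word `A C A Cᴴ A` in a positive definite `A` and an
invertible `C` is Hermitian positive definite. -/
theorem stmt_18 {n : ℕ} (A C : Matrix (Fin n) (Fin n) ℂ)
    (hA : A.PosDef) (hC : IsUnit C) :
    (A * C * A * Cᴴ * A).IsHermitian ∧ (A * C * A * Cᴴ * A).PosDef := by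
  have hCAC : (C * A * Cᴴ).PosDef :=
    hA.mul_mul_conjTranspose_same (Matrix.vecMul_injective_of_isUnit hC)
  have hW : (A * (C * A * Cᴴ) * Aᴴ).PosDef :=
    hCAC.mul_mul_conjTranspose_same (Matrix.vecMul_injective_of_isUnit hA.isUnit)
  rw [hA.isHermitian.eq, ← Matrix.mul_assoc, ← Matrix.mul_assoc] at hW
  exact ⟨hW.isHermitian, hW⟩
end

section
/- For an n-by-n complex matrix C, the following are equivalent: (i) 0 is not in the field of values F(C) = { x* C x : x ∈ C^n, x* x = 1 }; (ii) every leading principal minor of U* C^{-1} U is nonzero for every unitary U (in particular C is invertible and all principal submatrices of every unitary conjugate of C^{-1} are invertible). -/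
open scoped ComplexOrder Matrix

/-!
Both conditions say that the form `x ↦ xᴴ A x` has no nonzero isotropic vector (`A` is
anisotropic), for `A = C` and for `A = C⁻¹` respectively. Anisotropy forces invertibility, passes
from `C` to `C⁻¹` because `(Cx)ᴴ C⁻¹ (Cx) = star (xᴴ C x)`, and passes to `Pᴴ A P` for every `P` with
trivial kernel; leading principal submatrices of unitary conjugates are of this form. Conversely,
an isotropic unit vector `z` of `C⁻¹` is the first column of some unitary `U`, and then the `1 × 1`
leading minor of `Uᴴ C⁻¹ U` is `zᴴ C⁻¹ z = 0`.
-/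

namespace Matrix

section CommRing

variable {R ι κ : Type*} [CommRing R] [StarRing R] [Fintype ι]

/-- For `R = ℂ` this says `0 ∉ F(A)`. -/
def IsAnisotropic (A : Matrix ι ι R) : Prop :=
  ∀ x : ι → R, x ≠ 0 → star x ⬝ᵥ A *ᵥ x ≠ 0

theorem isAnisotropic_of_isEmpty [IsEmpty ι] (A : Matrix ι ι R) : A.IsAnisotropic :=
  fun x hx => (hx (Subsingleton.elim x 0)).elim

theorem star_smul_dotProduct_mulVec_smul (A : Matrix ι ι R) (c : R) (x : ι → R) :
    star (c • x) ⬝ᵥ A *ᵥ (c • x) = star c * c * (star x ⬝ᵥ A *ᵥ x) := by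
  rw [mulVec_smul, star_smul, smul_dotProduct, dotProduct_smul, smul_eq_mul, smul_eq_mul]
  ring

theorem star_dotProduct_conjTranspose_mul_mul_mulVec [Fintype κ] (A : Matrix ι ι R)
    (P : Matrix ι κ R) (x : κ → R) :
    star x ⬝ᵥ (Pᴴ * A * P) *ᵥ x = star (P *ᵥ x) ⬝ᵥ A *ᵥ (P *ᵥ x) := by
  rw [← mulVec_mulVec, ← mulVec_mulVec, dotProduct_mulVec, ← star_mulVec]

theorem mulVec_injective_of_conjTranspose_mul_self_eq_one [Fintype κ] [DecidableEq κ]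
    {P : Matrix ι κ R} (hP : Pᴴ * P = 1) : Function.Injective P.mulVec :=
  Function.LeftInverse.injective (g := (Pᴴ *ᵥ ·)) fun v => by
    simp only [mulVec_mulVec, hP, one_mulVec]

theorem submatrix_eq_conjTranspose_mul_mul [DecidableEq ι] (A : Matrix ι ι R) (e : κ → ι) :
    A.submatrix e e =
      ((1 : Matrix ι ι R).submatrix id e)ᴴ * A * (1 : Matrix ι ι R).submatrix id e := by
  ext i j
  simp [mul_apply, one_apply]

namespace IsAnisotropic

variable {A : Matrix ι ι R}

theorem conjTranspose_mul_mul [Fintype κ] (hA : A.IsAnisotropic) {P : Matrix ι κ R}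
    (hP : Function.Injective P.mulVec) : (Pᴴ * A * P).IsAnisotropic := fun x hx => by
  rw [star_dotProduct_conjTranspose_mul_mul_mulVec]
  exact hA _ fun h => hx (hP (by rw [h, mulVec_zero]))

theorem submatrix [Fintype κ] (hA : A.IsAnisotropic) {e : κ → ι} (he : Function.Injective e) :
    (A.submatrix e e).IsAnisotropic := by
  classical
  rw [submatrix_eq_conjTranspose_mul_mul]
  refine hA.conjTranspose_mul_mul (mulVec_injective_of_conjTranspose_mul_self_eq_one ?_)
  ext i j
  simp [mul_apply, one_apply, he.eq_iff]

end IsAnisotropic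

end CommRing

namespace IsAnisotropic

variable {K ι : Type*} [Field K] [StarRing K] [Fintype ι] [DecidableEq ι] {A : Matrix ι ι K}

theorem det_ne_zero (hA : A.IsAnisotropic) : A.det ≠ 0 := fun h => by
  obtain ⟨x, hx, hAx⟩ := exists_mulVec_eq_zero_iff.mpr h
  exact hA x hx (by rw [hAx, dotProduct_zero])

theorem inv (hA : A.IsAnisotropic) : A⁻¹.IsAnisotropic := fun y hy h => by
  have hy' : A *ᵥ (A⁻¹ *ᵥ y) = y := by
    rw [mulVec_mulVec, mul_nonsing_inv _ hA.det_ne_zero.isUnit, one_mulVec]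
  refine hA (A⁻¹ *ᵥ y) (fun h0 => hy (by rw [← hy', h0, mulVec_zero])) ?_
  rw [← star_eq_zero, ← star_dotProduct, hy', h]

end IsAnisotropic

section RCLike

variable {𝕜 ι : Type*} [RCLike 𝕜] [Fintype ι]

theorem exists_smul_dotProduct_smul_eq_one {x : ι → 𝕜} (hx : x ≠ 0) :
    ∃ c : 𝕜, star (c • x) ⬝ᵥ (c • x) = 1 := by
  obtain ⟨r, hr, hrx⟩ := RCLike.pos_iff_exists_ofReal.mp (dotProduct_star_self_pos_iff.mpr hx)
  refine ⟨((√r)⁻¹ : ℝ), ?_⟩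
  rw [star_smul, smul_dotProduct, dotProduct_smul, ← hrx, RCLike.star_def, RCLike.conj_ofReal,
    smul_eq_mul, smul_eq_mul, ← RCLike.ofReal_mul, ← RCLike.ofReal_mul, ← mul_assoc, ← mul_inv,
    Real.mul_self_sqrt hr.le, inv_mul_cancel₀ hr.ne', RCLike.ofReal_one]

theorem isAnisotropic_iff_forall_dotProduct_self_eq_one (A : Matrix ι ι 𝕜) :
    A.IsAnisotropic ↔ ∀ x : ι → 𝕜, star x ⬝ᵥ x = 1 → star x ⬝ᵥ A *ᵥ x ≠ 0 := by
  refine ⟨fun hA x hx => hA x ?_, fun h x hx hAx => ?_⟩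
  · rintro rfl
    simp at hx
  · obtain ⟨c, hc⟩ := exists_smul_dotProduct_smul_eq_one hx
    exact h _ hc (by rw [star_smul_dotProduct_mulVec_smul, hAx, mul_zero])

theorem exists_mem_unitaryGroup_mulVec_single_eq [DecidableEq ι] {z : ι → 𝕜}
    (hz : star z ⬝ᵥ z = 1) (i : ι) :
    ∃ U ∈ unitaryGroup ι 𝕜, U *ᵥ Pi.single i 1 = z := by
  have hnorm : ‖WithLp.toLp 2 z‖ = 1 := by
    have h := inner_self_eq_norm_sq_to_K (𝕜 := 𝕜) (WithLp.toLp 2 z)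
    rw [EuclideanSpace.inner_toLp_toLp, dotProduct_comm, hz] at h
    have h' : ‖WithLp.toLp 2 z‖ ^ 2 = 1 := by exact_mod_cast h.symm
    exact (pow_eq_one_iff_of_nonneg (norm_nonneg _) two_ne_zero).mp h'
  have hv : Orthonormal 𝕜 (({i} : Set ι).domRestrict fun _ => WithLp.toLp 2 z) :=
    orthonormal_subsingleton_iff.mpr fun _ => hnorm
  obtain ⟨b, hb⟩ := hv.exists_orthonormalBasis_extension_of_card_eq (by simp)
  refine ⟨(EuclideanSpace.basisFun ι 𝕜).toBasis.toMatrix b,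
    (EuclideanSpace.basisFun ι 𝕜).toMatrix_orthonormalBasis_mem_unitary b, ?_⟩
  ext j
  simp [Module.Basis.toMatrix_apply, hb i rfl]

theorem exists_mem_unitaryGroup_diag_eq_zero [DecidableEq ι] {A : Matrix ι ι 𝕜}
    (hA : ¬ A.IsAnisotropic) (i : ι) : ∃ U ∈ unitaryGroup ι 𝕜, (Uᴴ * A * U) i i = 0 := by
  rw [isAnisotropic_iff_forall_dotProduct_self_eq_one] at hA
  push Not at hA
  obtain ⟨z, hz, hAz⟩ := hA
  obtain ⟨U, hU, hUz⟩ := exists_mem_unitaryGroup_mulVec_single_eq hz i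
  refine ⟨U, hU, ?_⟩
  have hii : (Uᴴ * A * U) i i = star (Pi.single i 1) ⬝ᵥ (Uᴴ * A * U) *ᵥ Pi.single i 1 := by
    simp [Pi.star_single]
  rw [hii, star_dotProduct_conjTranspose_mul_mul_mulVec, hUz, hAz]

end RCLike

end Matrix

open Matrix

/-- `0` is not in the field of values of `C` iff every leading principal minor of every
unitary conjugate of `C⁻¹` is nonzero. -/
theorem stmt_19 {n : ℕ} (C : Matrix (Fin n) (Fin n) ℂ) :
    (∀ x : Fin n → ℂ, star x ⬝ᵥ x = 1 → star x ⬝ᵥ C.mulVec x ≠ 0) ↔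
      (∀ U ∈ Matrix.unitaryGroup (Fin n) ℂ, ∀ k : ℕ, ∀ h : k ≤ n,
        ((Uᴴ * C⁻¹ * U).submatrix (Fin.castLE h) (Fin.castLE h)).det ≠ 0) := by
  rw [← isAnisotropic_iff_forall_dotProduct_self_eq_one]
  constructor
  · intro hC U hU k hk
    have hU' := mulVec_injective_of_conjTranspose_mul_self_eq_one (mem_unitaryGroup_iff'.mp hU)
    exact ((hC.inv.conjTranspose_mul_mul hU').submatrix (Fin.castLE_injective hk)).det_ne_zero
  · intro hR
    by_contra hC
    have hdet : IsUnit C.det :=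
      isUnit_nonsing_inv_det_iff.mp (by simpa using hR 1 (one_mem _) n le_rfl)
    have hCinv : ¬ C⁻¹.IsAnisotropic := fun h =>
      hC (by simpa only [nonsing_inv_nonsing_inv _ hdet] using h.inv)
    have hn : 0 < n :=
      Fin.pos_iff_nonempty.mpr (not_isEmpty_iff.mp fun _ => hCinv (isAnisotropic_of_isEmpty _))
    obtain ⟨U, hU, hUC⟩ := exists_mem_unitaryGroup_diag_eq_zero hCinv ⟨0, hn⟩
    exact hR U hU 1 hn (by rw [det_fin_one]; exact hUC)
end
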